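/- Let ψ : ℝ⁴ → ℝ³ be given by ψ(a,b,c,d) = (c·tanh(b) + d, c·tanh(a+b) + d, c·tanh(2a+b) + d). Then for every y ≠ 0, the point (0, y, y) ∈ ℝ³ lies in the topological closure of the image ψ(ℝ⁴) but not in ψ(ℝ⁴) itself. -/
import Mathlib

lemma tanh_eq (x : ℝ) : Real.tanh x = 1 - 2 / (Real.exp (2 * x) + 1) := by
  have h1 : Real.exp x > 0 := Real.exp_pos x
  have h2 : Real.exp x + Real.exp (-x) > 0 := by positivity
  have h3 : Real.exp (2 * x) + 1 > 0 := by positivity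
  have he : Real.exp (2 * x) = Real.exp x * Real.exp x := by
    rw [← Real.exp_add]; ring_nf
  have hn : Real.exp (-x) = 1 / Real.exp x := by
    rw [Real.exp_neg]; exact (inv_eq_one_div _)
  rw [Real.tanh_eq_sinh_div_cosh, Real.sinh_eq, Real.cosh_eq, he, hn] at *
  field_simp
  ring

lemma tanh_inj : Function.Injective Real.tanh := by
  intro a b h
  rw [tanh_eq, tanh_eq] at h
  have h3 : Real.exp (2 * a) + 1 ≠ 0 := by positivity
  have h4 : Real.exp (2 * b) + 1 ≠ 0 := by positivity
  have : Real.exp (2 * a) = Real.exp (2 * b) := by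
    field_simp at h; linarith
  have := Real.exp_injective this
  linarith

lemma tanh_tendsto : Filter.Tendsto Real.tanh Filter.atTop (nhds 1) := by
  have h1 : Filter.Tendsto (fun x : ℝ => Real.exp (2 * x) + 1) Filter.atTop Filter.atTop := by
    apply Filter.Tendsto.atTop_add _ tendsto_const_nhds
    exact Real.tendsto_exp_atTop.comp
      (Filter.Tendsto.const_mul_atTop (by norm_num : (0:ℝ) < 2) Filter.tendsto_id)
  have h2 := Filter.Tendsto.div_atTop (tendsto_const_nhds (x := (2:ℝ))) h1
  have h3 := tendsto_const_nhds (x := (1:ℝ)) (f := Filter.atTop)|>.sub h2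
  rw [sub_zero] at h3
  show Filter.Tendsto (fun x => Real.tanh x) Filter.atTop (nhds 1)
  simp only [tanh_eq]
  exact h3

/-- The weight map `ψ : ℝ⁴ → ℝ³` of the two-layer tanh-activated network with scalar input
and output at the sample points `0`, `1`, `2`:
`ψ(a,b,c,d) = (c·tanh(b) + d, c·tanh(a+b) + d, c·tanh(2a+b) + d)`. -/
noncomputable def psi (θ : ℝ × ℝ × ℝ × ℝ) : Fin 3 → ℝ :=
  ![θ.2.2.1 * Real.tanh θ.2.1 + θ.2.2.2,
    θ.2.2.1 * Real.tanh (θ.1 + θ.2.1) + θ.2.2.2,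
    θ.2.2.1 * Real.tanh (2 * θ.1 + θ.2.1) + θ.2.2.2]

/-- For every `y ≠ 0`, the point `(0, y, y)` lies in the closure of the image `ψ(ℝ⁴)` but not
in `ψ(ℝ⁴)` itself. -/
theorem mem_closure_not_mem_image (y : ℝ) (hy : y ≠ 0) :
    (![0, y, y] ∈ closure (Set.range psi)) ∧ ![0, y, y] ∉ Set.range psi := by
  constructor
  · refine mem_closure_of_tendsto (b := Filter.atTop)
      (f := fun t : ℝ => psi (t, 0, y, 0)) ?_ ?_
    · rw [tendsto_pi_nhds]
      intro i
      fin_cases i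
      · simp [psi]
      · have : Filter.Tendsto (fun t : ℝ => y * Real.tanh (t + 0)) Filter.atTop (nhds (y * 1)) := by
          exact (tanh_tendsto.comp
            (Filter.tendsto_atTop_add_const_right _ 0 Filter.tendsto_id)).const_mul y
        simpa [psi] using this
      · have : Filter.Tendsto (fun t : ℝ => y * Real.tanh (2 * t + 0)) Filter.atTop
            (nhds (y * 1)) := by
          exact (tanh_tendsto.comp (Filter.tendsto_atTop_add_const_right _ 0
            (Filter.Tendsto.const_mul_atTop (by norm_num : (0:ℝ) < 2)
              Filter.tendsto_id))).const_mul y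
        simpa [psi] using this
    · exact Filter.Eventually.of_forall fun t => ⟨(t, 0, y, 0), rfl⟩
  · rintro ⟨⟨a, b, c, d⟩, h⟩
    have e1 := congrFun h 0
    have e2 := congrFun h 1
    have e3 := congrFun h 2
    simp [psi] at e1 e2 e3
    have hc : c ≠ 0 := by
      rintro rfl
      simp at e1 e2
      rw [e1] at e2
      exact hy e2.symm
    have : Real.tanh (a + b) = Real.tanh (2 * a + b) := by
      have : c * Real.tanh (a + b) = c * Real.tanh (2 * a + b) := by linarith
      exact mul_left_cancel₀ hc this
    have ha : a = 0 := by
      have := tanh_inj this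
      linarith
    rw [ha] at e2
    simp at e2
    rw [e1] at e2
    exact hy (by linarith)
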